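/- arXiv:1210.2081 — 2 statements merged into one kernel-verified Lean document; each statement's English description precedes it below -/
import Mathlib

section
/- For every integer m ≥ 2, every n ∈ ℕ, and every complex number z, the following identity holds: ∑_{k₁+⋯+k_m = n} ∏_{i=1}^{m} C(2kᵢ, kᵢ) q_{kᵢ}(z) = ∑_{k=0}^{n} C(2k, k) · 2^{2n-2k} · ((m-1)/2)_{n-k} / (n-k)! · q_k(mz), where the sum on the left is over all m-tuples (k₁, …, k_m) of nonnegative integers summing to n. -/
/-- The Bessel polynomial `q_n(z) = ∑_{l=0}^n [C(n,l)/C(2n,l)] (2z)^l / l!`. -/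
noncomputable def besselQ (n : ℕ) (z : ℂ) : ℂ :=
  ∑ l ∈ Finset.range (n + 1),
    ((n.choose l : ℂ) / ((2 * n).choose l : ℂ)) * (2 * z) ^ l / (Nat.factorial l : ℂ)

/-- The Pochhammer symbol (rising factorial) `(a)_j = a (a+1) ⋯ (a+j-1)`. -/
noncomputable def poch (a : ℂ) (j : ℕ) : ℂ := ∏ i ∈ Finset.range j, (a + i)

/-!
Let `g = X·C(X)` with `C` the Catalan series, so `g = X + g²`, and let
`c = ∑ C(2n,n) Xⁿ = g' = (1 - 4X)^(-1/2)`. One has `c·gˡ = ∑ₙ C(2n-l, n-l) Xⁿ`, hence the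
generating function `F_z = ∑ C(2n,n) q_n(z) Xⁿ` equals `c · exp(2z g)`. Therefore
`F_z^m = c^m exp(2mz g) = (1 - 4X)^(-(m-1)/2) · F_{mz}`, and comparing the coefficients of `Xⁿ`
gives the identity.
-/

open PowerSeries Finset
open scoped Nat

namespace Ring

variable {K : Type*} [Field K] [CharZero K]

theorem multichoose_eq_ascPochhammer_eval_div (a : K) (j : ℕ) :
    multichoose a j = (ascPochhammer K j).eval a / j ! := by
  rw [eq_div_iff (Nat.cast_ne_zero.2 j.factorial_ne_zero), mul_comm, ← nsmul_eq_mul,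
    factorial_nsmul_multichoose_eq_ascPochhammer, Polynomial.ascPochhammer_smeval_eq_eval]

theorem succ_mul_multichoose_succ (a : K) (j : ℕ) :
    (j + 1) * multichoose a (j + 1) = (a + j) * multichoose a j := by
  simp only [multichoose_eq_ascPochhammer_eval_div, ascPochhammer_succ_eval, Nat.factorial_succ]
  push_cast
  field_simp

end Ring

theorem Nat.cast_centralBinom_eq_four_pow_mul_multichoose {K : Type*} [Field K] [CharZero K]
    (n : ℕ) : (n.centralBinom : K) = 4 ^ n * Ring.multichoose (1 / 2 : K) n := by
  induction n with
  | zero => simp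
  | succ n ih =>
    have hn : (n + 1 : K) ≠ 0 := Nat.cast_add_one_ne_zero n
    refine mul_left_cancel₀ hn ?_
    rw [show (n + 1 : K) = ((n + 1 : ℕ) : K) by push_cast; ring, ← Nat.cast_mul,
      Nat.succ_mul_centralBinom_succ]
    push_cast
    linear_combination (4 * n + 2) * ih - 4 ^ (n + 1) * Ring.succ_mul_multichoose_succ (1 / 2 : K) n

namespace PowerSeries

theorem coeff_pow_eq_sum_antidiagonalTuple {R : Type*} [CommSemiring R] (f : R⟦X⟧) (m n : ℕ) :
    coeff n (f ^ m) = ∑ k ∈ Nat.antidiagonalTuple m n, ∏ i, coeff (k i) f := by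
  classical
  rw [← Fin.prod_const, coeff_prod, finsuppAntidiag, sum_map,
    ← piAntidiag_univ_fin_eq_antidiagonalTuple, ← sum_attach (piAntidiag univ n)]
  rfl

section Subst

variable {R : Type*} [CommRing R] {f : R⟦X⟧}

theorem coeff_pow_eq_zero_of_constantCoeff_eq_zero (hf : constantCoeff f = 0) {n l : ℕ}
    (h : n < l) : coeff n (f ^ l) = 0 :=
  X_pow_dvd_iff.1 (pow_dvd_pow_of_dvd (X_dvd_iff.2 hf) l) n h

theorem coeff_subst_eq_sum_range (hf : constantCoeff f = 0) (g : R⟦X⟧) {m n : ℕ} (h : m ≤ n) :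
    coeff m (g.subst f) = ∑ l ∈ range (n + 1), coeff l g * coeff m (f ^ l) := by
  rw [coeff_subst' (HasSubst.of_constantCoeff_zero' hf)]
  refine finsum_eq_sum_of_support_subset _ fun l hl => ?_
  by_contra hln
  simp only [coe_range, Set.mem_Iio, not_lt] at hln
  exact hl <| show coeff l g • coeff m (f ^ l) = 0 by
    rw [coeff_pow_eq_zero_of_constantCoeff_eq_zero hf (by omega), smul_zero]

theorem coeff_mul_subst (hf : constantCoeff f = 0) (h g : R⟦X⟧) (n : ℕ) :
    coeff n (h * g.subst f) = ∑ l ∈ range (n + 1), coeff l g * coeff n (h * f ^ l) := by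
  simp_rw [coeff_mul, mul_sum]
  rw [sum_comm]
  refine sum_congr rfl fun p hp => ?_
  rw [coeff_subst_eq_sum_range hf g (HasAntidiagonal.antidiagonal.snd_le hp), mul_sum]
  exact sum_congr rfl fun l _ => by ring

end Subst

section CentralBinom

variable (R : Type*) [CommRing R]

noncomputable def xCatalanSeries : R⟦X⟧ := X * catalanSeries.map (Nat.castRingHom R)

noncomputable def centralBinomSeries : R⟦X⟧ := mk fun n => (n.centralBinom : R)

noncomputable def shiftedCentralBinomSeries (l : ℕ) : R⟦X⟧ :=
  mk fun n => ((2 * n + l).choose n : R)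

variable {R}

theorem constantCoeff_xCatalanSeries : constantCoeff (xCatalanSeries R) = 0 := by
  simp [xCatalanSeries]

theorem xCatalanSeries_eq_X_add_sq : xCatalanSeries R = X + xCatalanSeries R ^ 2 := by
  have h := congrArg (map (Nat.castRingHom R)) catalanSeries_sq_mul_X_add_one
  simp only [map_add, map_mul, map_pow, map_X, map_one] at h
  rw [xCatalanSeries]
  linear_combination (-X) * h

theorem derivative_xCatalanSeries : d⁄dX R (xCatalanSeries R) = centralBinomSeries R := by
  ext n
  rw [coeff_derivative, xCatalanSeries, coeff_succ_X_mul, centralBinomSeries, coeff_mk,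
    coeff_map, catalanSeries_coeff, ← succ_mul_catalan_eq_centralBinom]
  push_cast
  ring

/-- Differentiate `g = X + g²`. -/
theorem centralBinomSeries_sub_one :
    centralBinomSeries R - 1 = 2 * xCatalanSeries R * centralBinomSeries R := by
  have h := congrArg (d⁄dX R) (xCatalanSeries_eq_X_add_sq (R := R))
  rw [map_add, derivative_X, derivative_pow, derivative_xCatalanSeries] at h
  simp only [Nat.cast_ofNat, Nat.add_one_sub_one, pow_one] at h
  linear_combination h

theorem shiftedCentralBinomSeries_zero :
    shiftedCentralBinomSeries R 0 = centralBinomSeries R := by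
  ext n
  simp [shiftedCentralBinomSeries, centralBinomSeries, Nat.centralBinom]

theorem shiftedCentralBinomSeries_succ (l : ℕ) :
    shiftedCentralBinomSeries R (l + 1) =
      shiftedCentralBinomSeries R l + X * shiftedCentralBinomSeries R (l + 2) := by
  ext (_ | n)
  · simp [shiftedCentralBinomSeries]
  · rw [map_add, coeff_succ_X_mul]
    simp only [shiftedCentralBinomSeries, coeff_mk]
    rw [show 2 * (n + 1) + (l + 1) = (2 * n + (l + 2)) + 1 by ring,
      show 2 * (n + 1) + l = 2 * n + (l + 2) by ring, Nat.choose_succ_succ', Nat.cast_add,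
      add_comm]

theorem two_mul_X_mul_shiftedCentralBinomSeries_one :
    2 * (X * shiftedCentralBinomSeries R 1) = centralBinomSeries R - 1 := by
  ext (_ | n)
  · simp [centralBinomSeries]
  · rw [show (2 : R⟦X⟧) = C (2 : R) from (map_ofNat C 2).symm, coeff_C_mul, coeff_succ_X_mul,
      map_sub, coeff_one, if_neg n.succ_ne_zero, sub_zero]
    simp only [shiftedCentralBinomSeries, centralBinomSeries, coeff_mk]
    rw [Nat.centralBinom_eq_two_mul_choose, show 2 * (n + 1) = (2 * n + 1) + 1 by ring,
      Nat.choose_succ_succ', Nat.choose_symm_half]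
    push_cast
    ring

variable [IsDomain R] [CharZero R]

theorem X_mul_shiftedCentralBinomSeries_one :
    X * shiftedCentralBinomSeries R 1 = xCatalanSeries R * centralBinomSeries R := by
  have h2 : (2 : R⟦X⟧) ≠ 0 := fun h => (two_ne_zero : (2 : R) ≠ 0) <| by
    simpa only [map_ofNat, map_zero] using congrArg constantCoeff h
  refine mul_left_cancel₀ h2 ?_
  rw [two_mul_X_mul_shiftedCentralBinomSeries_one, centralBinomSeries_sub_one]
  ring

theorem centralBinomSeries_mul_xCatalanSeries_pow :
    ∀ l, centralBinomSeries R * xCatalanSeries R ^ l = X ^ l * shiftedCentralBinomSeries R l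
  | 0 => by simp [shiftedCentralBinomSeries_zero]
  | 1 => by rw [pow_one, pow_one, X_mul_shiftedCentralBinomSeries_one, mul_comm]
  | l + 2 => by
    linear_combination X ^ (l + 1) * shiftedCentralBinomSeries_succ (R := R) l +
      centralBinomSeries_mul_xCatalanSeries_pow (l + 1) -
      X * centralBinomSeries_mul_xCatalanSeries_pow l -
      centralBinomSeries R * xCatalanSeries R ^ l * xCatalanSeries_eq_X_add_sq (R := R)

theorem coeff_centralBinomSeries_mul_xCatalanSeries_pow {l n : ℕ} (h : l ≤ n) :
    coeff n (centralBinomSeries R * xCatalanSeries R ^ l) = ((2 * n - l).choose (n - l) : R) := by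
  obtain ⟨k, rfl⟩ := Nat.exists_eq_add_of_le h
  rw [centralBinomSeries_mul_xCatalanSeries_pow, add_comm, coeff_X_pow_mul,
    shiftedCentralBinomSeries, coeff_mk, show 2 * (k + l) - l = 2 * k + l by omega,
    Nat.add_sub_cancel]

end CentralBinom

section Binomial

variable {K : Type*} [Field K] [CharZero K]

variable (K) in
noncomputable def oneSubFourXPowNeg (a : K) : K⟦X⟧ := rescale (-4) (binomialSeries K (-a))

theorem coeff_oneSubFourXPowNeg (a : K) (j : ℕ) :
    coeff j (oneSubFourXPowNeg K a) = 4 ^ j * Ring.multichoose a j := by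
  rw [oneSubFourXPowNeg, coeff_rescale, binomialSeries_coeff, Ring.choose_neg', Units.smul_def,
    Int.coe_negOnePow_natCast]
  rw [zsmul_eq_mul, smul_eq_mul, mul_one, Int.cast_pow, Int.cast_neg, Int.cast_one, neg_pow,
    mul_mul_mul_comm, ← mul_pow, mul_neg_one, neg_neg, one_pow, one_mul]

theorem oneSubFourXPowNeg_add (a b : K) :
    oneSubFourXPowNeg K (a + b) = oneSubFourXPowNeg K a * oneSubFourXPowNeg K b := by
  rw [oneSubFourXPowNeg, neg_add, binomialSeries_add, map_mul]
  rfl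

theorem oneSubFourXPowNeg_natCast_mul (m : ℕ) (a : K) :
    oneSubFourXPowNeg K (m * a) = oneSubFourXPowNeg K a ^ m := by
  induction m with
  | zero => simp [oneSubFourXPowNeg]
  | succ m ih => rw [Nat.cast_succ, add_one_mul, oneSubFourXPowNeg_add, ih, pow_succ]

theorem centralBinomSeries_eq_oneSubFourXPowNeg :
    centralBinomSeries K = oneSubFourXPowNeg K (1 / 2) := by
  ext n
  rw [coeff_oneSubFourXPowNeg, centralBinomSeries, coeff_mk,
    Nat.cast_centralBinom_eq_four_pow_mul_multichoose]

end Binomial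

end PowerSeries

theorem poch_eq_ascPochhammer_eval (a : ℂ) (j : ℕ) : poch a j = (ascPochhammer ℂ j).eval a := by
  induction j with
  | zero => simp [poch]
  | succ j ih => rw [poch, prod_range_succ, ← poch, ih, ascPochhammer_succ_eval]

theorem centralBinom_mul_besselQ (n : ℕ) (z : ℂ) :
    ((2 * n).choose n : ℂ) * besselQ n z =
      ∑ l ∈ range (n + 1), (2 * z) ^ l / l ! * ((2 * n - l).choose (n - l) : ℂ) := by
  rw [besselQ, mul_sum]
  refine sum_congr rfl fun l hl => ?_
  have hln : l ≤ n := Nat.lt_succ_iff.1 (mem_range.1 hl)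
  have hchoose : ((2 * n).choose n * n.choose l : ℂ) =
      (2 * n).choose l * (2 * n - l).choose (n - l) := by
    exact_mod_cast Nat.choose_mul (n := 2 * n) hln
  have : ((2 * n).choose l : ℂ) ≠ 0 := Nat.cast_ne_zero.2 (Nat.choose_pos (by omega)).ne'
  have : (l ! : ℂ) ≠ 0 := Nat.cast_ne_zero.2 l.factorial_ne_zero
  field_simp
  linear_combination (2 * z) ^ l * hchoose

noncomputable def besselSeries (z : ℂ) : ℂ⟦X⟧ :=
  mk fun n => ((2 * n).choose n : ℂ) * besselQ n z

noncomputable def besselExp (z : ℂ) : ℂ⟦X⟧ :=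
  (rescale (2 * z) (exp ℂ)).subst (xCatalanSeries ℂ)

theorem besselExp_pow (z : ℂ) (m : ℕ) : besselExp z ^ m = besselExp (m * z) := by
  rw [besselExp, besselExp,
    ← subst_pow (HasSubst.of_constantCoeff_zero' constantCoeff_xCatalanSeries), ← map_pow,
    exp_pow_eq_rescale_exp, rescale_rescale, mul_left_comm]

theorem besselSeries_eq (z : ℂ) : besselSeries z = centralBinomSeries ℂ * besselExp z := by
  ext n
  rw [besselExp, coeff_mul_subst constantCoeff_xCatalanSeries, besselSeries, coeff_mk,
    centralBinom_mul_besselQ]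
  refine sum_congr rfl fun l hl => ?_
  rw [coeff_centralBinomSeries_mul_xCatalanSeries_pow (Nat.lt_succ_iff.1 (mem_range.1 hl)),
    coeff_rescale, coeff_exp]
  simp [div_eq_mul_inv]

theorem besselSeries_pow (z : ℂ) (m : ℕ) :
    besselSeries z ^ m = oneSubFourXPowNeg ℂ ((m - 1) / 2) * besselSeries (m * z) := by
  rw [besselSeries_eq, besselSeries_eq, mul_pow, besselExp_pow,
    centralBinomSeries_eq_oneSubFourXPowNeg, ← oneSubFourXPowNeg_natCast_mul, ← mul_assoc,
    ← oneSubFourXPowNeg_add]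
  ring_nf

theorem stmt_1_general (m : ℕ) (n : ℕ) (z : ℂ) :
    ∑ k ∈ Finset.Nat.antidiagonalTuple m n,
      ∏ i, (((2 * k i).choose (k i) : ℂ) * besselQ (k i) z) =
    ∑ k ∈ Finset.range (n + 1),
      ((2 * k).choose k : ℂ) * 2 ^ (2 * n - 2 * k) * poch (((m : ℂ) - 1) / 2) (n - k)
        / (Nat.factorial (n - k) : ℂ) * besselQ k (m * z) := by
  have hcoeff (k : ℕ) : coeff k (besselSeries z) = ((2 * k).choose k : ℂ) * besselQ k z :=
    coeff_mk _ _
  simp_rw [← hcoeff, ← coeff_pow_eq_sum_antidiagonalTuple, besselSeries_pow,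
    mul_comm (oneSubFourXPowNeg ℂ _), coeff_mul, Nat.sum_antidiagonal_eq_sum_range_succ_mk]
  refine sum_congr rfl fun k _ => ?_
  rw [besselSeries, coeff_mk, coeff_oneSubFourXPowNeg, Ring.multichoose_eq_ascPochhammer_eval_div,
    ← poch_eq_ascPochhammer_eval, show 2 * n - 2 * k = 2 * (n - k) by omega, pow_mul]
  ring

theorem stmt_1 (m : ℕ) (hm : 2 ≤ m) (n : ℕ) (z : ℂ) :
    ∑ k ∈ Finset.Nat.antidiagonalTuple m n,
      ∏ i, (((2 * k i).choose (k i) : ℂ) * besselQ (k i) z) =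
    ∑ k ∈ Finset.range (n + 1),
      ((2 * k).choose k : ℂ) * 2 ^ (2 * n - 2 * k) * poch (((m : ℂ) - 1) / 2) (n - k)
        / (Nat.factorial (n - k) : ℂ) * besselQ k (m * z) :=
  stmt_1_general m n z
end

section
/- For every integer m ≥ 2, every n ∈ ℕ, and all complex numbers z₁, …, z_m with z = z₁ + ⋯ + z_m, the Carlitz Bessel polynomials satisfy the multinomial property ∑_{k₁+⋯+k_m = n} ∏_{i=1}^{m} f_{kᵢ}(zᵢ)/kᵢ! = f_n(z)/n!, where the sum is over all m-tuples (k₁, …, k_m) of nonnegative integers summing to n. -/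
/-- The reverse Bessel polynomial `θ_n(z) = ((2n)!/n!) 2^{-n} q_n(z)`. -/
noncomputable def besselTheta (n : ℕ) (z : ℂ) : ℂ :=
  ((Nat.factorial (2 * n) : ℂ) / (Nat.factorial n : ℂ)) * ((2 : ℂ) ^ n)⁻¹ * besselQ n z

/-- The Carlitz Bessel polynomials: `f₀(z) = 1` and `f_n(z) = z θ_{n-1}(z)` for `n ≥ 1`. -/
noncomputable def besselF (n : ℕ) (z : ℂ) : ℂ :=
  if n = 0 then 1 else z * besselTheta (n - 1) z

open PowerSeries Finset

theorem catalan_mul_factorial_mul_factorial (d : ℕ) :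
    catalan d * (d.factorial * (d + 1).factorial) = (2 * d).factorial := by
  have h := Nat.choose_mul_factorial_mul_factorial (show d ≤ 2 * d by omega)
  rw [show 2 * d - d = d by omega, ← Nat.centralBinom_eq_two_mul_choose,
    ← succ_mul_catalan_eq_centralBinom] at h
  rw [← h, Nat.factorial_succ]
  ring

namespace PowerSeries

theorem coeff_pow_eq_zero_of_lt {R : Type*} [CommSemiring R] {G : R⟦X⟧}
    (hG : constantCoeff G = 0) {n d : ℕ} (h : n < d) : coeff n (G ^ d) = 0 := by
  obtain ⟨H, rfl⟩ := X_dvd_iff.mpr hG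
  rw [mul_pow, coeff_X_pow_mul', if_neg (by omega)]

theorem coeff_prod_eq_sum_antidiagonalTuple {R : Type*} [CommSemiring R] {m : ℕ}
    (f : Fin m → R⟦X⟧) (n : ℕ) :
    coeff n (∏ i, f i) = ∑ k ∈ Nat.antidiagonalTuple m n, ∏ i, coeff (k i) (f i) := by
  rw [coeff_prod, ← piAntidiag_univ_fin_eq_antidiagonalTuple]
  refine sum_nbij' (fun l => ⇑l) (fun k => Finsupp.equivFunOnFinite.symm k) ?_ ?_ ?_ ?_ ?_ <;>
    intro _ _ <;> simp_all

theorem prod_rescale_exp {A : Type*} [CommRing A] [Algebra ℚ A] {ι : Type*} (s : Finset ι)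
    (x : ι → A) : ∏ i ∈ s, rescale (x i) (exp A) = rescale (∑ i ∈ s, x i) (exp A) := by
  classical
  induction s using Finset.induction_on with
  | empty => simp
  | insert i s hi ih => rw [prod_insert hi, sum_insert hi, ih, exp_mul_exp_eq_exp_add]

theorem prod_subst_rescale_exp {A : Type*} [CommRing A] [Algebra ℚ A] {G : A⟦X⟧}
    (hG : constantCoeff G = 0) {ι : Type*} (s : Finset ι) (x : ι → A) :
    ∏ i ∈ s, (rescale (x i) (exp A)).subst G = (rescale (∑ i ∈ s, x i) (exp A)).subst G := by
  rw [← prod_rescale_exp, ← coe_substAlgHom (HasSubst.of_constantCoeff_zero' hG), map_prod]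

theorem coeff_subst_rescale_exp {K : Type*} [Field K] [CharZero K] {G : K⟦X⟧}
    (hG : constantCoeff G = 0) (x : K) (n : ℕ) :
    coeff n ((rescale x (exp K)).subst G) =
      ∑ a ∈ range (n + 1), x ^ a / a.factorial * coeff n (G ^ a) := by
  rw [coeff_subst' (HasSubst.of_constantCoeff_zero' hG),
    finsum_eq_sum_of_support_subset _ (s := range (n + 1))]
  · refine sum_congr rfl fun a _ => ?_
    simp [coeff_rescale, coeff_exp, div_eq_mul_inv, mul_comm]
  · intro a ha
    simp only [Function.mem_support, coe_range, Set.mem_Iio] at ha ⊢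
    by_contra! h
    exact ha (by rw [coeff_pow_eq_zero_of_lt hG (by omega), smul_zero])

theorem coeff_map_catalanSeries_pow_add_two {R : Type*} [CommRing R] (k d : ℕ) :
    coeff d ((catalanSeries.map (Nat.castRingHom R)) ^ (k + 2)) =
      coeff (d + 1) ((catalanSeries.map (Nat.castRingHom R)) ^ (k + 1)) -
        coeff (d + 1) ((catalanSeries.map (Nat.castRingHom R)) ^ k) := by
  set C := catalanSeries.map (Nat.castRingHom R)
  have hC : C ^ 2 * X + 1 = C := by
    simpa using congrArg (map (Nat.castRingHom R)) catalanSeries_sq_mul_X_add_one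
  have hk : C ^ (k + 2) * X + C ^ k = C ^ (k + 1) := by linear_combination C ^ k * hC
  rw [eq_sub_iff_add_eq, ← coeff_succ_mul_X, ← map_add, hk]

theorem coeff_map_catalanSeries_pow_succ {K : Type*} [Field K] [CharZero K] : ∀ a d : ℕ,
    coeff d ((catalanSeries.map (Nat.castRingHom K)) ^ (a + 1)) =
      (a + 1) * (a + 2 * d).factorial / (d.factorial * (a + d + 1).factorial)
  | 0, d => by
    rw [eq_div_iff (by simp [Nat.factorial_ne_zero])]
    simpa using congrArg (Nat.cast : ℕ → K) (catalan_mul_factorial_mul_factorial d)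
  | 1, d => by
    rw [coeff_map_catalanSeries_pow_add_two, coeff_map_catalanSeries_pow_succ 0, pow_zero,
      coeff_one, if_neg d.succ_ne_zero, sub_zero,
      show 0 + 2 * (d + 1) = (2 * d + 1) + 1 by ring, show 0 + (d + 1) + 1 = d + 2 by ring,
      show 1 + 2 * d = 2 * d + 1 by ring, show 1 + d + 1 = d + 2 by ring,
      Nat.factorial_succ (2 * d + 1), Nat.factorial_succ d]
    have : ((d + 2 : ℕ) : K) ≠ 0 := Nat.cast_ne_zero.2 (by omega)
    simp only [Nat.cast_mul]
    field_simp
    push_cast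
    ring
  | a + 2, d => by
    rw [coeff_map_catalanSeries_pow_add_two, coeff_map_catalanSeries_pow_succ (a + 1),
      coeff_map_catalanSeries_pow_succ a,
      show a + 1 + 2 * (d + 1) = (a + 2 * d + 2) + 1 by ring,
      show a + 1 + (d + 1) + 1 = (a + d + 2) + 1 by ring,
      show a + 2 * (d + 1) = a + 2 * d + 2 by ring, show a + (d + 1) + 1 = a + d + 2 by ring,
      show a + 2 + 2 * d = a + 2 * d + 2 by ring, show a + 2 + d + 1 = (a + d + 2) + 1 by ring,
      Nat.factorial_succ (a + 2 * d + 2), Nat.factorial_succ (a + d + 2), Nat.factorial_succ d]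
    have : ((a + d + 2 + 1 : ℕ) : K) ≠ 0 := Nat.cast_ne_zero.2 (by omega)
    simp only [Nat.cast_mul]
    field_simp
    push_cast
    ring

end PowerSeries

/-- The series `1 - √(1 - 2X) = X C(X/2)`, `C` the Catalan series. -/
noncomputable def besselInnerSeries : ℂ⟦X⟧ :=
  X * rescale (2⁻¹ : ℂ) (catalanSeries.map (Nat.castRingHom ℂ))

theorem constantCoeff_besselInnerSeries : constantCoeff besselInnerSeries = 0 := by
  simp [besselInnerSeries]

theorem coeff_besselInnerSeries_pow_succ (a d : ℕ) :
    coeff (a + d + 1) (besselInnerSeries ^ (a + 1)) =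
      (a + 1) * (a + 2 * d).factorial / (d.factorial * (a + d + 1).factorial * 2 ^ d) := by
  rw [besselInnerSeries, mul_pow, ← map_pow, coeff_X_pow_mul', if_pos (by omega),
    show a + d + 1 - (a + 1) = d by omega, coeff_rescale, coeff_map_catalanSeries_pow_succ,
    inv_pow]
  field_simp

theorem besselF_div_factorial (n : ℕ) (z : ℂ) :
    besselF n z / n.factorial = coeff n ((rescale z (exp ℂ)).subst besselInnerSeries) := by
  rw [coeff_subst_rescale_exp constantCoeff_besselInnerSeries]
  rcases n with _ | N
  · simp [besselF]
  rw [sum_range_succ', pow_zero, pow_zero, coeff_one, if_neg N.succ_ne_zero, mul_zero, add_zero,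
    besselF, if_neg N.succ_ne_zero, Nat.add_sub_cancel, besselTheta, besselQ, mul_sum, mul_sum,
    sum_div]
  refine sum_congr rfl fun l hl => ?_
  obtain ⟨d, rfl⟩ : ∃ d, N = l + d := ⟨N - l, by rw [mem_range] at hl; omega⟩
  rw [coeff_besselInnerSeries_pow_succ, Nat.cast_choose ℂ (show l ≤ l + d by omega),
    Nat.cast_choose ℂ (show l ≤ 2 * (l + d) by omega), show 2 * (l + d) - l = l + 2 * d by omega,
    Nat.add_sub_cancel_left, Nat.factorial_succ l, Nat.factorial_succ (l + d), pow_add, mul_pow,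
    show 2 * (l + d) = l + 2 * d + l by ring]
  simp only [Nat.cast_mul]
  have : ((l + 1 : ℕ) : ℂ) ≠ 0 := Nat.cast_ne_zero.2 (by omega)
  have : ((l + d + 1 : ℕ) : ℂ) ≠ 0 := Nat.cast_ne_zero.2 (by omega)
  have : ((l + 2 * d + l).factorial : ℂ) ≠ 0 := Nat.cast_ne_zero.2 (Nat.factorial_ne_zero _)
  field_simp
  push_cast
  ring

theorem stmt_11_general (m : ℕ) (n : ℕ) (zv : Fin m → ℂ) :
    ∑ k ∈ Finset.Nat.antidiagonalTuple m n,
      ∏ i, besselF (k i) (zv i) / (Nat.factorial (k i) : ℂ) =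
    besselF n (∑ i, zv i) / (Nat.factorial n : ℂ) := by
  simp only [besselF_div_factorial]
  rw [← coeff_prod_eq_sum_antidiagonalTuple,
    prod_subst_rescale_exp constantCoeff_besselInnerSeries]

theorem stmt_11 (m : ℕ) (hm : 2 ≤ m) (n : ℕ) (zv : Fin m → ℂ) :
    ∑ k ∈ Finset.Nat.antidiagonalTuple m n,
      ∏ i, besselF (k i) (zv i) / (Nat.factorial (k i) : ℂ) =
    besselF n (∑ i, zv i) / (Nat.factorial n : ℂ) :=
  stmt_11_general m n zv
end
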